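/- arXiv:1507.07397 — 2 statements merged into one kernel-verified Lean document; each statement's English description precedes it below -/
import Mathlib

section
/- Let Ω ∈ (0,1) be a quadratic irrational with eventually periodic continued fraction Ω = [b₁,…,b_r,ā₁,…,ā_m] (with r ≥ 0), let T be the associated unimodular matrix with eigenvector (1,Ω) and eigenvalue λ > 1 (T = A₁⋯A_m if r = 0, and T = S(A₁⋯A_m)S⁻¹ with S = B₁⋯B_r if r ≥ 1), and let U = σ·(T⁻¹)ᵀ with σ = det T = (−1)^m. Then U·v(j) = v(j+m) for all j ≥ r, where v(j) = (−p_j, q_j) are the resonant convergents; consequently the sequence of resonant convergents v(j), j ≥ r, splits into m resonant sequences. -/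
open Real Filter Matrix

noncomputable section

/-- Orbit of the Gauss map `g(x) = {1/x}` starting at `Ω`:
`x₀ = Ω`, `x_{j+1} = g(x_j)`. -/
def gaussOrbit (Ω : ℝ) : ℕ → ℝ
  | 0 => Ω
  | j + 1 => Int.fract (1 / gaussOrbit Ω j)

/-- `cfA Ω j` is the partial quotient `a_{j+1}` of the continued fraction of `Ω`. -/
def cfA (Ω : ℝ) (j : ℕ) : ℤ := ⌊1 / gaussOrbit Ω j⌋

/-- The matrix `[[a, 1], [1, 0]]`. -/
def Acf (a : ℤ) : Matrix (Fin 2) (Fin 2) ℤ := !![a, 1; 1, 0]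

/-- The product `A₁ ⋯ A_m` with `A_i = [[a_i, 1], [1, 0]]`. -/
def cfMatProd (Ω : ℝ) (m : ℕ) : Matrix (Fin 2) (Fin 2) ℤ :=
  ((List.range m).map fun i => Acf (cfA Ω i)).prod

/-- `cfQ Ω (j+1) = q_j`:  `q₋₁ = 0`, `q₀ = 1`, `q_j = a_j q_{j-1} + q_{j-2}`. -/
def cfQ (Ω : ℝ) : ℕ → ℤ
  | 0 => 0
  | 1 => 1
  | j + 2 => cfA Ω j * cfQ Ω (j + 1) + cfQ Ω j

/-- `cfP Ω (j+1) = p_j`:  `p₋₁ = 1`, `p₀ = 0`, `p_j = a_j p_{j-1} + p_{j-2}`. -/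
def cfP (Ω : ℝ) : ℕ → ℤ
  | 0 => 1
  | 1 => 0
  | j + 2 => cfA Ω j * cfP Ω (j + 1) + cfP Ω j

/-- The vector convergent `w(j) = (q_j, p_j)`. -/
def wconv (Ω : ℝ) (j : ℕ) : Fin 2 → ℤ := ![cfQ Ω (j + 1), cfP Ω (j + 1)]

/-- The resonant convergent `v(j) = (−p_j, q_j)`. -/
def vconv (Ω : ℝ) (j : ℕ) : Fin 2 → ℤ := ![-cfP Ω (j + 1), cfQ Ω (j + 1)]

/-- A quadratic irrational number. -/
def IsQuadraticIrrational (Ω : ℝ) : Prop :=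
  Irrational Ω ∧ ∃ A B C : ℤ, A ≠ 0 ∧ (A : ℝ) * Ω ^ 2 + (B : ℝ) * Ω + (C : ℝ) = 0

end

noncomputable section

/-- The matrix `T` associated to an eventually periodic continued fraction with
pre-period `r` and period `m`: `T = S (A₁⋯A_m) S⁻¹` (which is `A₁⋯A_m` when `r = 0`). -/
def Tev (Ω : ℝ) (r m : ℕ) : Matrix (Fin 2) (Fin 2) ℤ :=
  cfMatProd Ω r * cfMatProd (gaussOrbit Ω r) m * (cfMatProd Ω r)⁻¹

/-- `U = σ (T⁻¹)ᵀ`, `σ = det T = (−1)^m`. -/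
def Uev (Ω : ℝ) (r m : ℕ) : Matrix (Fin 2) (Fin 2) ℤ :=
  ((-1 : ℤ) ^ m) • ((Tev Ω r m)⁻¹)ᵀ

end


lemma gauss_add (Ω : ℝ) (a : ℕ) : ∀ b, gaussOrbit Ω (a + b) = gaussOrbit (gaussOrbit Ω a) b
  | 0 => rfl
  | b + 1 => by
      show gaussOrbit Ω ((a + b) + 1) = _
      simp only [gaussOrbit, gauss_add Ω a b]

lemma cfA_add (Ω : ℝ) (a b : ℕ) : cfA Ω (a + b) = cfA (gaussOrbit Ω a) b := by
  unfold cfA; rw [gauss_add]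

lemma cfMatProd_succ (Ω : ℝ) (j : ℕ) :
    cfMatProd Ω (j + 1) = cfMatProd Ω j * Acf (cfA Ω j) := by
  unfold cfMatProd
  rw [List.range_succ, List.map_append, List.prod_append]
  simp

lemma cfMatProd_add (Ω : ℝ) (a b : ℕ) :
    cfMatProd Ω (a + b) = cfMatProd Ω a * cfMatProd (gaussOrbit Ω a) b := by
  unfold cfMatProd
  rw [List.range_add, List.map_append, List.prod_append, List.map_map]
  congr 1
  congr 1
  apply List.map_congr_left
  intro i _
  simp [Function.comp, cfA_add]

lemma cfMatProd_det (Ω : ℝ) : ∀ k, (cfMatProd Ω k).det = (-1) ^ k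
  | 0 => by simp [cfMatProd]
  | k + 1 => by
      rw [cfMatProd_succ, Matrix.det_mul, cfMatProd_det Ω k, Acf]
      rw [Matrix.det_fin_two_of]
      ring

lemma cfMatProd_entries (Ω : ℝ) : ∀ j,
    cfMatProd Ω j = !![cfQ Ω (j + 1), cfQ Ω j; cfP Ω (j + 1), cfP Ω j]
  | 0 => by
      show (1 : Matrix (Fin 2) (Fin 2) ℤ) = _
      rw [Matrix.one_fin_two]
      rfl
  | j + 1 => by
      rw [cfMatProd_succ, cfMatProd_entries Ω j, Acf, Matrix.mul_fin_two]
      have hq : cfQ Ω (j + 2) = cfA Ω j * cfQ Ω (j + 1) + cfQ Ω j := by rw [cfQ]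
      have hp : cfP Ω (j + 2) = cfA Ω j * cfP Ω (j + 1) + cfP Ω j := by rw [cfP]
      rw [hq, hp]
      ext i j
      fin_cases i <;> fin_cases j <;> simp <;> ring

lemma neg_one_pow_sq (m : ℕ) : ((-1 : ℤ) ^ m) * ((-1 : ℤ) ^ m) = 1 := by
  rcases neg_one_pow_eq_or ℤ m with h | h <;> rw [h] <;> ring

/-- For a 2×2 integer matrix with det `(-1)^m`,
`(-1)^m • (T⁻¹)ᵀ = J T J⁻¹` with `J = !![0,-1;1,0]`. -/
lemma smul_inv_transpose (T : Matrix (Fin 2) (Fin 2) ℤ) (m : ℕ)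
    (hdet : T.det = (-1) ^ m) :
    ((-1 : ℤ) ^ m) • (T⁻¹)ᵀ = !![(0:ℤ), -1; 1, 0] * T * !![(0:ℤ), 1; -1, 0] := by
  have hinv : T⁻¹ = ((-1 : ℤ) ^ m) • T.adjugate := by
    apply Matrix.inv_eq_right_inv
    rw [Matrix.mul_smul, Matrix.mul_adjugate, hdet, smul_smul, neg_one_pow_sq, one_smul]
  have hT : T = !![T 0 0, T 0 1; T 1 0, T 1 1] := by
    ext i j; fin_cases i <;> fin_cases j <;> rfl
  rw [hinv, Matrix.transpose_smul, smul_smul, neg_one_pow_sq, one_smul,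
    Matrix.adjugate_fin_two]
  conv_rhs => rw [hT]
  rw [Matrix.mul_fin_two, Matrix.mul_fin_two]
  ext i j
  fin_cases i <;> fin_cases j <;> simp [Matrix.transpose_apply] <;> ring

/-- Lemma 2(a): for `Ω ∈ (0,1)` quadratic with eventually periodic continued fraction
`Ω = [b₁,…,b_r, ā₁,…,ā_m]` (`r ≥ 0`), one has `U v(j) = v(j+m)` for `j ≥ r`, where
`v(j) = (−p_j, q_j)`; consequently the resonant convergents `v(j)`, `j ≥ r`, split into
the `m` resonant sequences generated by `v(r),…,v(r+m−1)`. -/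
theorem splitting_quadratic_stmt3
    (Ω : ℝ) (m r : ℕ) (hm : 1 ≤ m) (h0 : 0 < Ω) (h1 : Ω < 1)
    (hquad : IsQuadraticIrrational Ω)
    (hper : gaussOrbit Ω (r + m) = gaussOrbit Ω r) :
    (∀ j : ℕ, r ≤ j → (Uev Ω r m).mulVec (vconv Ω j) = vconv Ω (j + m)) ∧
    (∀ j : ℕ, r ≤ j → ∃ i : ℕ, r ≤ i ∧ i < r + m ∧ ∃ n : ℕ,
      vconv Ω j = ((Uev Ω r m) ^ n).mulVec (vconv Ω i)) := by
  have hx : gaussOrbit (gaussOrbit Ω r) m = gaussOrbit Ω r := by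
    rw [← gauss_add]; exact hper
  have hMx : ∀ k, cfMatProd (gaussOrbit Ω r) (m + k)
      = cfMatProd (gaussOrbit Ω r) m * cfMatProd (gaussOrbit Ω r) k := by
    intro k; rw [cfMatProd_add, hx]
  have hMr_unit : IsUnit (cfMatProd Ω r).det := by
    rw [cfMatProd_det]; exact (isUnit_one.neg).pow r
  have key : ∀ k, Tev Ω r m * cfMatProd Ω (r + k) = cfMatProd Ω (r + k + m) := by
    intro k
    have h1 : cfMatProd Ω (r + k)
        = cfMatProd Ω r * cfMatProd (gaussOrbit Ω r) k := cfMatProd_add Ω r k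
    have h2 : cfMatProd Ω (r + k + m)
        = cfMatProd Ω r * (cfMatProd (gaussOrbit Ω r) m * cfMatProd (gaussOrbit Ω r) k) := by
      rw [show r + k + m = r + (m + k) by omega, cfMatProd_add, hMx]
    rw [h1, h2, Tev, Matrix.mul_assoc (cfMatProd Ω r * cfMatProd (gaussOrbit Ω r) m),
      ← Matrix.mul_assoc (cfMatProd Ω r)⁻¹, Matrix.nonsing_inv_mul _ hMr_unit,
      Matrix.one_mul, Matrix.mul_assoc]
  have hdetT : (Tev Ω r m).det = (-1) ^ m := by
    have h := congrArg Matrix.det (key 0)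
    rw [Matrix.det_mul, cfMatProd_det, cfMatProd_det] at h
    have hne : ((-1 : ℤ)) ^ (r + 0) ≠ 0 := pow_ne_zero _ (by norm_num)
    apply mul_right_cancel₀ hne
    rw [h, ← pow_add]
    congr 1
    omega
  have hU : Uev Ω r m = !![(0:ℤ), -1; 1, 0] * Tev Ω r m * !![(0:ℤ), 1; -1, 0] := by
    rw [Uev]; exact smul_inv_transpose _ m hdetT
  have hcol : ∀ i, (cfMatProd Ω i).mulVec ![(1:ℤ), 0] = wconv Ω i := by
    intro i
    rw [cfMatProd_entries]
    funext s
    fin_cases s <;> simp [Matrix.mulVec, wconv, dotProduct, Fin.sum_univ_two]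
  have hw : ∀ j, r ≤ j → (Tev Ω r m).mulVec (wconv Ω j) = wconv Ω (j + m) := by
    intro j hj
    obtain ⟨k, rfl⟩ := Nat.exists_eq_add_of_le hj
    have h := congrArg (fun M : Matrix (Fin 2) (Fin 2) ℤ => M.mulVec ![(1:ℤ), 0]) (key k)
    simp only [← Matrix.mulVec_mulVec] at h
    rw [hcol, hcol] at h
    exact h
  have part1 : ∀ j, r ≤ j → (Uev Ω r m).mulVec (vconv Ω j) = vconv Ω (j + m) := by
    intro j hj
    rw [hU, ← Matrix.mulVec_mulVec, ← Matrix.mulVec_mulVec]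
    have h1 : (!![(0:ℤ), 1; -1, 0]).mulVec (vconv Ω j) = wconv Ω j := by
      funext s
      fin_cases s <;> simp [vconv, wconv, Matrix.mulVec, dotProduct, Fin.sum_univ_two]
    rw [h1, hw j hj]
    funext s
    fin_cases s <;> simp [vconv, wconv, Matrix.mulVec, dotProduct, Fin.sum_univ_two]
  refine ⟨part1, ?_⟩
  intro j hj
  obtain ⟨k, rfl⟩ := Nat.exists_eq_add_of_le hj
  refine ⟨r + k % m, Nat.le_add_right _ _,
    by have := Nat.mod_lt k (show 0 < m by omega); omega, k / m, ?_⟩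
  have hiter : ∀ n : ℕ,
      ((Uev Ω r m) ^ n).mulVec (vconv Ω (r + k % m)) = vconv Ω (r + k % m + n * m) := by
    intro n
    induction n with
    | zero => simp
    | succ n ih =>
      rw [pow_succ', ← Matrix.mulVec_mulVec, ih, part1 _ (by omega)]
      congr 1
      ring
  have hkey : r + k % m + k / m * m = r + k := by
    have := Nat.mod_add_div' k m
    omega
  rw [hiter, hkey]
end

section
/- Let Ω ∈ (0,1) be a quadratic irrational with purely periodic continued fraction, associated matrix T = [[a,b],[c,d]] and eigenvalue λ > 1. Then for every primitive integer q, the limit numerator satisfies the lower bound γ*_q > ((1+Ω)q − α)/(2λ), where α = |b|Ω(1+Ω)/(2|c+bΩ²|). -/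
open Real Filter Matrix

noncomputable section

/-- `⟨k, ω⟩ = k₁ + k₂ Ω` for `ω = (1, Ω)`. -/
def pairω (Ω : ℝ) (k : Fin 2 → ℤ) : ℝ := (k 0 : ℝ) + (k 1 : ℝ) * Ω

/-- `|k|₁ = |k₁| + |k₂|`. -/
def norm1 (k : Fin 2 → ℤ) : ℤ := |k 0| + |k 1|

/-- `p⁰(q)`: the integer nearest to `qΩ`. -/
def p0 (Ω : ℝ) (q : ℤ) : ℤ := round ((q : ℝ) * Ω)

/-- `k⁰(q) = (−p⁰(q), q)`. -/
def kzero (Ω : ℝ) (q : ℤ) : Fin 2 → ℤ := ![-p0 Ω q, q]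

/-- The set `A` of quasi-resonances: vectors `k⁰(q)`, `q ≥ 1`, with `|⟨k,ω⟩| < 1/2`. -/
def inA (Ω : ℝ) (k : Fin 2 → ℤ) : Prop :=
  ∃ q : ℤ, 1 ≤ q ∧ k = kzero Ω q ∧ |pairω Ω k| < 1 / 2

/-- A quasi-resonance `k` is primitive if `U⁻¹k` is not a quasi-resonance. -/
def PrimitiveVec (Ω : ℝ) (U : Matrix (Fin 2) (Fin 2) ℤ) (k : Fin 2 → ℤ) : Prop :=
  inA Ω k ∧ ¬inA Ω (U⁻¹.mulVec k)

/-- A primitive integer `q ≥ 1`. -/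
def PrimitiveInt (Ω : ℝ) (U : Matrix (Fin 2) (Fin 2) ℤ) (q : ℤ) : Prop :=
  1 ≤ q ∧ PrimitiveVec Ω U (kzero Ω q)

/-- The resonant sequence `s(q, n) = Uⁿ k⁰(q)`. -/
def sres (Ω : ℝ) (U : Matrix (Fin 2) (Fin 2) ℤ) (q : ℤ) (n : ℕ) : Fin 2 → ℤ :=
  (U ^ n).mulVec (kzero Ω q)

/-- `U = σ (T⁻¹)ᵀ` with `σ = det T = (−1)^m` and `T = A₁⋯A_m`. -/
def Umat (Ω : ℝ) (m : ℕ) : Matrix (Fin 2) (Fin 2) ℤ :=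
  ((-1 : ℤ) ^ m) • ((cfMatProd Ω m)⁻¹)ᵀ

/-- The numerator `γ_k = |⟨k,ω⟩| · |k|₁`. -/
def gammaK (Ω : ℝ) (k : Fin 2 → ℤ) : ℝ := |pairω Ω k| * (norm1 k : ℝ)

/-- `K_q = |z_q|(1+Ω)/|c+bΩ²|`, where `z_q = cq + bpΩ`, `p = p⁰(q)`,
and `b, c` are the off-diagonal entries of `T = A₁⋯A_m = [[a,b],[c,d]]`. -/
def KqD (Ω : ℝ) (m : ℕ) (q : ℤ) : ℝ :=
  |(cfMatProd Ω m 1 0 : ℝ) * (q : ℝ) + (cfMatProd Ω m 0 1 : ℝ) * (p0 Ω q : ℝ) * Ω| * (1 + Ω) /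
    |(cfMatProd Ω m 1 0 : ℝ) + (cfMatProd Ω m 0 1 : ℝ) * Ω ^ 2|

/-- The limit numerator `γ*_q = |r_q| K_q` with `r_q = qΩ − p⁰(q)`. -/
def gammaStarQ (Ω : ℝ) (m : ℕ) (q : ℤ) : ℝ :=
  |(q : ℝ) * Ω - (p0 Ω q : ℝ)| * KqD Ω m q

end

/-!
Since `Tω = λω`, the pairing satisfies `⟨Tᵀk, ω⟩ = λ⟨k, ω⟩`, so `U⁻¹ = ±Tᵀ` multiplies it by `±λ`.
If `|qΩ - p| ≤ 1/(2λ)` with `q ≥ b = q_{m-1}`, the second coordinate of `U⁻¹k⁰(q)` stays positive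
and `U⁻¹k⁰(q)` would again be a quasi-resonance, against primitivity; if `q < b`, best
approximation gives `|qΩ - p| > 1/(q_{m-1} + q_{m-2}) ≥ 1/(2b) > 1/(2λ)`. So
`1/(2λ) < |r_q| < 1/2`, and writing `cq + bpΩ = q(c + bΩ²) - bΩ r_q` reduces the claim to an
elementary inequality in `|r_q|`.
-/

lemma neg_one_pow_mul_self {R : Type*} [Monoid R] [HasDistribNeg R] (n : ℕ) :
    (-1 : R) ^ n * (-1) ^ n = 1 := by
  rw [← pow_add, ← two_mul, pow_mul, neg_one_sq, one_pow]

section GaussMap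

variable {Ω : ℝ}

lemma irrational_gaussOrbit (hirr : Irrational Ω) (j : ℕ) : Irrational (gaussOrbit Ω j) := by
  induction j with
  | zero => exact hirr
  | succ j ih => exact (one_div (gaussOrbit Ω j) ▸ ih.inv).sub_intCast _

lemma gaussOrbit_pos (hirr : Irrational Ω) (h0 : 0 < Ω) (j : ℕ) : 0 < gaussOrbit Ω j := by
  cases j with
  | zero => exact h0
  | succ j =>
    have hinv : Irrational (1 / gaussOrbit Ω j) :=
      one_div (gaussOrbit Ω j) ▸ (irrational_gaussOrbit hirr j).inv
    exact Int.fract_pos.mpr (hinv.ne_int _)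

lemma gaussOrbit_lt_one (h1 : Ω < 1) (j : ℕ) : gaussOrbit Ω j < 1 := by
  cases j with
  | zero => exact h1
  | succ j => exact Int.fract_lt_one _

lemma one_le_cfA (hirr : Irrational Ω) (h0 : 0 < Ω) (h1 : Ω < 1) (j : ℕ) : 1 ≤ cfA Ω j := by
  have hpos := gaussOrbit_pos hirr h0 j
  rw [cfA, Int.le_floor, Int.cast_one, le_div_iff₀ hpos]
  linarith [gaussOrbit_lt_one h1 j]

lemma gaussOrbit_mul_cfA_add (hirr : Irrational Ω) (h0 : 0 < Ω) (j : ℕ) :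
    gaussOrbit Ω j * (cfA Ω j + gaussOrbit Ω (j + 1)) = 1 := by
  rw [cfA, gaussOrbit, Int.floor_add_fract]
  exact mul_one_div_cancel (gaussOrbit_pos hirr h0 j).ne'

end GaussMap

lemma nonneg_monotone_of_recurrence {a x : ℕ → ℤ} (ha : ∀ j, 1 ≤ a j)
    (hx : ∀ j, x (j + 2) = a j * x (j + 1) + x j) (h0 : 0 ≤ x 0) (h01 : x 0 ≤ x 1) :
    0 ≤ x ∧ Monotone x := by
  have step : ∀ j, 0 ≤ x j ∧ x j ≤ x (j + 1) := by
    intro j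
    induction j with
    | zero => exact ⟨h0, h01⟩
    | succ j ih =>
      have hj : 0 ≤ x (j + 1) := ih.1.trans ih.2
      refine ⟨hj, ?_⟩
      rw [hx j]
      nlinarith [ha j]
  exact ⟨fun j => (step j).1, monotone_nat_of_le_succ fun j => (step j).2⟩

section Convergents

variable {Ω : ℝ}

lemma cfQ_nonneg_monotone (hirr : Irrational Ω) (h0 : 0 < Ω) (h1 : Ω < 1) :
    0 ≤ cfQ Ω ∧ Monotone (cfQ Ω) :=
  nonneg_monotone_of_recurrence (one_le_cfA hirr h0 h1) (fun _ => rfl) le_rfl zero_le_one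

lemma one_le_cfQ_succ (hirr : Irrational Ω) (h0 : 0 < Ω) (h1 : Ω < 1) (j : ℕ) :
    1 ≤ cfQ Ω (j + 1) :=
  (cfQ_nonneg_monotone hirr h0 h1).2 (Nat.le_add_left 1 j)

lemma cfP_succ_nonneg_monotone (hirr : Irrational Ω) (h0 : 0 < Ω) (h1 : Ω < 1) :
    0 ≤ (fun j => cfP Ω (j + 1)) ∧ Monotone fun j => cfP Ω (j + 1) :=
  nonneg_monotone_of_recurrence (fun j => one_le_cfA hirr h0 h1 (j + 1)) (fun _ => rfl) le_rfl
    (by simp [cfP])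

lemma one_le_cfP (hirr : Irrational Ω) (h0 : 0 < Ω) (h1 : Ω < 1) (j : ℕ) : 1 ≤ cfP Ω (j + 2) := by
  have h := (cfP_succ_nonneg_monotone hirr h0 h1).2 (Nat.le_add_left 1 j)
  simpa [cfP] using h

lemma cfP_mul_cfQ_sub_cfQ_mul_cfP (j : ℕ) :
    cfP Ω (j + 1) * cfQ Ω j - cfQ Ω (j + 1) * cfP Ω j = (-1) ^ (j + 1) := by
  induction j with
  | zero => simp [cfP, cfQ]
  | succ j ih =>
    rw [show cfP Ω (j + 2) = cfA Ω j * cfP Ω (j + 1) + cfP Ω j from rfl,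
      show cfQ Ω (j + 2) = cfA Ω j * cfQ Ω (j + 1) + cfQ Ω j from rfl, pow_succ, ← ih]
    ring

lemma cfP_add_mul_gaussOrbit (hirr : Irrational Ω) (h0 : 0 < Ω) (j : ℕ) :
    (cfP Ω (j + 1) : ℝ) + cfP Ω j * gaussOrbit Ω j
      = Ω * (cfQ Ω (j + 1) + cfQ Ω j * gaussOrbit Ω j) := by
  induction j with
  | zero => simp [cfP, cfQ, gaussOrbit]
  | succ j ih =>
    have hinv := gaussOrbit_mul_cfA_add hirr h0 j
    rw [show cfP Ω (j + 2) = cfA Ω j * cfP Ω (j + 1) + cfP Ω j from rfl,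
      show cfQ Ω (j + 2) = cfA Ω j * cfQ Ω (j + 1) + cfQ Ω j from rfl]
    push_cast
    linear_combination (cfA Ω j + gaussOrbit Ω (j + 1)) * ih
      + (Ω * cfQ Ω j - cfP Ω j) * hinv

/-- `cfErr Ω (j + 1) = q_j Ω - p_j`. -/
noncomputable def cfErr (Ω : ℝ) (j : ℕ) : ℝ := cfQ Ω j * Ω - cfP Ω j

/-- The denominator in `Ω = (p_j + p_{j-1} x_j) / (q_j + q_{j-1} x_j)`, `x_j` the `j`-th Gauss
iterate: `cfDenom Ω j = q_j + q_{j-1} x_j`. -/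
noncomputable def cfDenom (Ω : ℝ) (j : ℕ) : ℝ := cfQ Ω (j + 1) + cfQ Ω j * gaussOrbit Ω j

lemma cfErr_mul_cfDenom (hirr : Irrational Ω) (h0 : 0 < Ω) (j : ℕ) :
    cfErr Ω j * cfDenom Ω j = (-1) ^ (j + 1) := by
  have hdet : ((cfP Ω (j + 1) * cfQ Ω j - cfQ Ω (j + 1) * cfP Ω j : ℤ) : ℝ) = (-1) ^ (j + 1) := by
    exact_mod_cast cfP_mul_cfQ_sub_cfQ_mul_cfP j
  push_cast at hdet
  rw [cfErr, cfDenom]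
  linear_combination -(cfQ Ω j : ℝ) * cfP_add_mul_gaussOrbit hirr h0 j + hdet

lemma one_le_cfDenom (hirr : Irrational Ω) (h0 : 0 < Ω) (h1 : Ω < 1) (j : ℕ) :
    1 ≤ cfDenom Ω j := by
  have hq1 : (1 : ℝ) ≤ cfQ Ω (j + 1) := mod_cast one_le_cfQ_succ hirr h0 h1 j
  have hq0 : (0 : ℝ) ≤ cfQ Ω j := mod_cast (cfQ_nonneg_monotone hirr h0 h1).1 j
  rw [cfDenom]
  nlinarith [gaussOrbit_pos hirr h0 j]

lemma cfDenom_pos (hirr : Irrational Ω) (h0 : 0 < Ω) (h1 : Ω < 1) (j : ℕ) : 0 < cfDenom Ω j :=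
  zero_lt_one.trans_le (one_le_cfDenom hirr h0 h1 j)

lemma abs_cfErr_mul_cfDenom (hirr : Irrational Ω) (h0 : 0 < Ω) (h1 : Ω < 1) (j : ℕ) :
    |cfErr Ω j| * cfDenom Ω j = 1 := by
  rw [← abs_of_pos (cfDenom_pos hirr h0 h1 j), ← abs_mul, cfErr_mul_cfDenom hirr h0, abs_pow,
    abs_neg, abs_one, one_pow]

lemma abs_cfErr_le_one (hirr : Irrational Ω) (h0 : 0 < Ω) (h1 : Ω < 1) (j : ℕ) :
    |cfErr Ω j| ≤ 1 := by
  nlinarith [abs_cfErr_mul_cfDenom hirr h0 h1 j, one_le_cfDenom hirr h0 h1 j,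
    abs_nonneg (cfErr Ω j)]

lemma one_div_lt_abs_cfErr (hirr : Irrational Ω) (h0 : 0 < Ω) (h1 : Ω < 1) (j : ℕ) :
    1 / (cfQ Ω (j + 2) + cfQ Ω (j + 1) : ℝ) < |cfErr Ω (j + 1)| := by
  have hq : (1 : ℝ) ≤ cfQ Ω (j + 1) := mod_cast one_le_cfQ_succ hirr h0 h1 j
  rw [eq_one_div_of_mul_eq_one_left (abs_cfErr_mul_cfDenom hirr h0 h1 (j + 1))]
  apply one_div_lt_one_div_of_lt (cfDenom_pos hirr h0 h1 (j + 1))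
  rw [cfDenom]
  nlinarith [gaussOrbit_lt_one h1 (j + 1)]

lemma cfErr_mul_cfErr_succ_neg (hirr : Irrational Ω) (h0 : 0 < Ω) (h1 : Ω < 1) (j : ℕ) :
    cfErr Ω j * cfErr Ω (j + 1) < 0 := by
  refine neg_of_mul_neg_left ?_
    (mul_pos (cfDenom_pos hirr h0 h1 j) (cfDenom_pos hirr h0 h1 (j + 1))).le
  calc cfErr Ω j * cfErr Ω (j + 1) * (cfDenom Ω j * cfDenom Ω (j + 1))
      = (cfErr Ω j * cfDenom Ω j) * (cfErr Ω (j + 1) * cfDenom Ω (j + 1)) := by ring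
    _ = (-1) ^ (j + 1) * (-1) ^ (j + 1 + 1) := by
      rw [cfErr_mul_cfDenom hirr h0, cfErr_mul_cfDenom hirr h0]
    _ < 0 := by rw [pow_succ _ (j + 1), ← mul_assoc, neg_one_pow_mul_self]; norm_num

/-- Best approximation of the second kind. -/
lemma abs_cfErr_le (hirr : Irrational Ω) (h0 : 0 < Ω) (h1 : Ω < 1) {j : ℕ} {q p : ℤ}
    (hq : 1 ≤ q) (hqj : q < cfQ Ω (j + 1)) : |cfErr Ω j| ≤ |q * Ω - p| := by
  set s : ℤ := (-1) ^ (j + 1)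
  have hdet := cfP_mul_cfQ_sub_cfQ_mul_cfP (Ω := Ω) j
  have hs : s * s = 1 := neg_one_pow_mul_self _
  -- `(x, y)` are the coordinates of `(q, p)` in the unimodular basis of consecutive convergents;
  -- they have opposite signs, as do the two errors, so both terms of `hsplit` have the same sign.
  set x : ℤ := s * (cfP Ω (j + 1) * q - cfQ Ω (j + 1) * p)
  set y : ℤ := s * (cfQ Ω j * p - cfP Ω j * q)
  have hqxy : q = x * cfQ Ω j + y * cfQ Ω (j + 1) := by
    linear_combination (-q * s) * hdet - q * hs
  have hpxy : p = x * cfP Ω j + y * cfP Ω (j + 1) := by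
    linear_combination (-p * s) * hdet - p * hs
  have hsplit : (q : ℝ) * Ω - p = x * cfErr Ω j + y * cfErr Ω (j + 1) := by
    rw [hqxy, hpxy, cfErr, cfErr]
    push_cast
    ring
  have hQ0 : 0 ≤ cfQ Ω j := (cfQ_nonneg_monotone hirr h0 h1).1 j
  have hx : x ≠ 0 := by
    rintro hx0
    rw [hx0, zero_mul, zero_add] at hqxy
    rcases le_or_gt y 0 with hy' | hy' <;> nlinarith
  have hxy : x * y ≤ 0 := by
    rcases le_or_gt x 0 with hx' | hx' <;> rcases le_or_gt y 0 with hy' | hy'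
    · nlinarith [mul_nonpos_of_nonpos_of_nonneg hx' hQ0]
    · nlinarith
    · nlinarith
    · nlinarith [mul_nonneg hx'.le hQ0]
  have hsame : 0 ≤ (x * cfErr Ω j) * (y * cfErr Ω (j + 1)) := by
    have hxyR : (x : ℝ) * y ≤ 0 := mod_cast hxy
    nlinarith [cfErr_mul_cfErr_succ_neg hirr h0 h1 j]
  have hx1 : (1 : ℝ) ≤ |(x : ℝ)| := mod_cast Int.one_le_abs hx
  calc |cfErr Ω j| ≤ |(x : ℝ)| * |cfErr Ω j| := le_mul_of_one_le_left (abs_nonneg _) hx1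
    _ = |x * cfErr Ω j| := (abs_mul _ _).symm
    _ ≤ |x * cfErr Ω j + y * cfErr Ω (j + 1)| := sq_le_sq.mp (by nlinarith)
    _ = |q * Ω - p| := by rw [hsplit]

lemma one_div_lt_abs_sub_of_lt_cfQ (hirr : Irrational Ω) (h0 : 0 < Ω) (h1 : Ω < 1) {j : ℕ}
    {q p : ℤ} (hq : 1 ≤ q) (hqj : q < cfQ Ω (j + 2)) :
    1 / (cfQ Ω (j + 2) + cfQ Ω (j + 1) : ℝ) < |q * Ω - p| :=
  (one_div_lt_abs_cfErr hirr h0 h1 j).trans_le (abs_cfErr_le hirr h0 h1 hq hqj)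

end Convergents

section TransferMatrix

variable {Ω : ℝ}

lemma cfMatProd_eq (n : ℕ) :
    cfMatProd Ω n = !![cfQ Ω (n + 1), cfQ Ω n; cfP Ω (n + 1), cfP Ω n] := by
  induction n with
  | zero =>
    ext i j
    fin_cases i <;> fin_cases j <;> simp [cfMatProd, cfQ, cfP]
  | succ n ih =>
    rw [cfMatProd, List.range_succ, List.map_append, List.prod_append, ← cfMatProd, ih]
    rw [show cfQ Ω (n + 2) = cfA Ω n * cfQ Ω (n + 1) + cfQ Ω n from rfl,
      show cfP Ω (n + 2) = cfA Ω n * cfP Ω (n + 1) + cfP Ω n from rfl]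
    ext i j
    fin_cases i <;> fin_cases j <;> simp [Acf, mul_apply, Fin.sum_univ_two] <;> ring

lemma det_cfMatProd (n : ℕ) : (cfMatProd Ω n).det = (-1) ^ n := by
  rw [cfMatProd_eq, det_fin_two_of]
  linear_combination -cfP_mul_cfQ_sub_cfQ_mul_cfP (Ω := Ω) n

lemma Umat_inv (m : ℕ) : (Umat Ω m)⁻¹ = (-1) ^ m • (cfMatProd Ω m)ᵀ := by
  have hunit : IsUnit (cfMatProd Ω m).det := by
    rw [det_cfMatProd]
    exact isUnit_one.neg.pow m
  apply inv_eq_right_inv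
  rw [Umat, Matrix.smul_mul, Matrix.mul_smul, smul_smul, ← transpose_mul, mul_nonsing_inv _ hunit,
    transpose_one, neg_one_pow_mul_self, one_smul]

end TransferMatrix

section Pairing

variable {Ω lam : ℝ} {T : Matrix (Fin 2) (Fin 2) ℤ}

lemma pairω_smul (c : ℤ) (k : Fin 2 → ℤ) : pairω Ω (c • k) = c * pairω Ω k := by
  simp only [pairω, Pi.smul_apply, smul_eq_mul, Int.cast_mul]
  ring

lemma pairω_kzero (q : ℤ) : pairω Ω (kzero Ω q) = q * Ω - p0 Ω q := by
  simp only [pairω, kzero, cons_val_zero, cons_val_one, Int.cast_neg]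
  ring

lemma eigen_rows (heig : (T.map fun z : ℤ => (z : ℝ)) *ᵥ ![1, Ω] = lam • ![1, Ω]) :
    (T 0 0 : ℝ) + T 0 1 * Ω = lam ∧ (T 1 0 : ℝ) + T 1 1 * Ω = lam * Ω := by
  have h0 := congrFun heig 0
  have h1 := congrFun heig 1
  simp only [mulVec, dotProduct, Fin.sum_univ_two, map_apply, cons_val_zero, cons_val_one,
    Pi.smul_apply, smul_eq_mul, mul_one] at h0 h1
  exact ⟨h0, h1⟩

lemma pairω_transpose_mulVec (heig : (T.map fun z : ℤ => (z : ℝ)) *ᵥ ![1, Ω] = lam • ![1, Ω])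
    (k : Fin 2 → ℤ) : pairω Ω (Tᵀ *ᵥ k) = lam * pairω Ω k := by
  obtain ⟨h0, h1⟩ := eigen_rows heig
  simp only [pairω, mulVec, dotProduct, Fin.sum_univ_two, transpose_apply]
  push_cast
  linear_combination (k 0 : ℝ) * h0 + (k 1 : ℝ) * h1

lemma mul_transpose_mulVec_one
    (heig : (T.map fun z : ℤ => (z : ℝ)) *ᵥ ![1, Ω] = lam • ![1, Ω]) (k : Fin 2 → ℤ) :
    lam * (Tᵀ *ᵥ k) 1 = T.det * k 1 + lam * T 0 1 * pairω Ω k := by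
  obtain ⟨h0, h1⟩ := eigen_rows heig
  simp only [pairω, mulVec, dotProduct, Fin.sum_univ_two, transpose_apply, det_fin_two]
  push_cast
  linear_combination ((T 0 1 : ℝ) * k 1) * h1 - ((T 1 1 : ℝ) * k 1) * h0

lemma abs_pairω_ne_half (hirr : Irrational Ω) {k : Fin 2 → ℤ} (hk : k 1 ≠ 0) :
    |pairω Ω k| ≠ 1 / 2 := by
  have hk : Irrational (pairω Ω k) := (hirr.intCast_mul hk).intCast_add (k 0)
  intro h
  rcases (abs_eq (by norm_num)).mp h with h | h
  · exact hk.ne_rat (1 / 2) (by rw [h]; norm_num)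
  · exact hk.ne_rat (-1 / 2) (by rw [h]; norm_num)

lemma inA_of_abs_pairω_lt {k : Fin 2 → ℤ} (hk : 1 ≤ k 1) (h : |pairω Ω k| < 1 / 2) :
    inA Ω k := by
  refine ⟨k 1, hk, ?_, h⟩
  have hround : p0 Ω (k 1) = -k 0 := by
    rw [p0, round_eq_iff]
    rw [pairω, abs_lt] at h
    push_cast
    constructor <;> linarith
  ext i
  fin_cases i <;> simp [kzero, hround]

end Pairing

section Primitive

variable {Ω lam : ℝ} {m : ℕ}

lemma pairω_Umat_inv_mulVec
    (heig : ((cfMatProd Ω m).map fun z : ℤ => (z : ℝ)) *ᵥ ![1, Ω] = lam • ![1, Ω])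
    (k : Fin 2 → ℤ) : pairω Ω ((Umat Ω m)⁻¹ *ᵥ k) = (-1) ^ m * (lam * pairω Ω k) := by
  rw [Umat_inv, smul_mulVec, pairω_smul, pairω_transpose_mulVec heig]
  push_cast
  rfl

lemma mul_Umat_inv_mulVec_one
    (heig : ((cfMatProd Ω m).map fun z : ℤ => (z : ℝ)) *ᵥ ![1, Ω] = lam • ![1, Ω])
    (k : Fin 2 → ℤ) :
    lam * ((Umat Ω m)⁻¹ *ᵥ k) 1 = k 1 + (-1) ^ m * lam * cfQ Ω m * pairω Ω k := by
  have h := mul_transpose_mulVec_one heig k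
  have hb : cfMatProd Ω m 0 1 = cfQ Ω m := by rw [cfMatProd_eq]; rfl
  rw [det_cfMatProd, hb] at h
  rw [Umat_inv, smul_mulVec, Pi.smul_apply, smul_eq_mul]
  push_cast at h ⊢
  linear_combination (-1 : ℝ) ^ m * h + (k 1 : ℝ) * neg_one_pow_mul_self (R := ℝ) m

lemma cfQ_lt_of_eigen (hirr : Irrational Ω) (h0 : 0 < Ω) (h1 : Ω < 1) (hm : 1 ≤ m)
    (heig : ((cfMatProd Ω m).map fun z : ℤ => (z : ℝ)) *ᵥ ![1, Ω] = lam • ![1, Ω]) :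
    (cfQ Ω m : ℝ) < lam := by
  have hrow := (eigen_rows heig).1
  simp only [cfMatProd_eq, of_apply, cons_val', cons_val_zero, cons_val_one, empty_val',
    cons_val_fin_one] at hrow
  have hle : (cfQ Ω m : ℝ) ≤ cfQ Ω (m + 1) := mod_cast (cfQ_nonneg_monotone hirr h0 h1).2 m.le_succ
  have hpos : (1 : ℝ) ≤ cfQ Ω m := by
    obtain ⟨j, rfl⟩ := Nat.exists_eq_add_of_le' hm
    exact mod_cast one_le_cfQ_succ hirr h0 h1 j
  nlinarith

lemma one_div_two_mul_lt_abs_sub_of_lt_cfQ (hirr : Irrational Ω) (h0 : 0 < Ω) (h1 : Ω < 1)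
    {q p : ℤ} (hq : 1 ≤ q) (hqm : q < cfQ Ω m) (hlam : (cfQ Ω m : ℝ) < lam) :
    1 / (2 * lam) < |q * Ω - p| := by
  obtain _ | _ | j := m
  · exact absurd hqm (by simp [cfQ]; omega)
  · exact absurd hqm (by simp [cfQ]; omega)
  have hQ : (1 : ℝ) ≤ cfQ Ω (j + 1) := mod_cast one_le_cfQ_succ hirr h0 h1 j
  have hmono : (cfQ Ω (j + 1) : ℝ) ≤ cfQ Ω (j + 2) :=
    mod_cast (cfQ_nonneg_monotone hirr h0 h1).2 (j + 1).le_succ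
  calc 1 / (2 * lam) < 1 / (2 * cfQ Ω (j + 2)) :=
        one_div_lt_one_div_of_lt (by linarith) (by linarith)
    _ ≤ 1 / (cfQ Ω (j + 2) + cfQ Ω (j + 1)) :=
        one_div_le_one_div_of_le (by linarith) (by linarith)
    _ < |q * Ω - p| := one_div_lt_abs_sub_of_lt_cfQ hirr h0 h1 hq hqm

lemma one_div_two_mul_lt_abs_sub_p0 (hirr : Irrational Ω) (h0 : 0 < Ω) (h1 : Ω < 1) (hm : 1 ≤ m)
    (hlam : 1 < lam)
    (heig : ((cfMatProd Ω m).map fun z : ℤ => (z : ℝ)) *ᵥ ![1, Ω] = lam • ![1, Ω])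
    {q : ℤ} (hq : 1 ≤ q) (hprim : ¬inA Ω ((Umat Ω m)⁻¹ *ᵥ kzero Ω q)) :
    1 / (2 * lam) < |q * Ω - p0 Ω q| := by
  have hb_lt := cfQ_lt_of_eigen hirr h0 h1 hm heig
  by_cases hqb : q < cfQ Ω m
  · exact one_div_two_mul_lt_abs_sub_of_lt_cfQ hirr h0 h1 hq hqb hb_lt
  by_contra! hsmall
  set r : ℝ := q * Ω - p0 Ω q
  set k := (Umat Ω m)⁻¹ *ᵥ kzero Ω q
  have hlamr : lam * |r| ≤ 1 / 2 := by
    rw [le_div_iff₀ (by linarith)] at hsmall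
    linarith
  have hpair : |pairω Ω k| = lam * |r| := by
    rw [pairω_Umat_inv_mulVec heig, pairω_kzero, abs_mul, abs_pow, abs_neg, abs_one, one_pow,
      one_mul, abs_mul, abs_of_pos (by linarith)]
  have hk1 : 1 ≤ k 1 := by
    have hmul := mul_Umat_inv_mulVec_one heig (kzero Ω q)
    rw [pairω_kzero, show kzero Ω q 1 = q from rfl] at hmul
    have hb : (cfQ Ω m : ℝ) ≤ q := mod_cast not_lt.mp hqb
    have hb0 : (0 : ℝ) ≤ cfQ Ω m := mod_cast (cfQ_nonneg_monotone hirr h0 h1).1 m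
    have hdev : |(-1) ^ m * lam * cfQ Ω m * r| ≤ q / 2 := by
      rw [abs_mul, abs_mul, abs_mul, abs_pow, abs_neg, abs_one, one_pow, one_mul,
        abs_of_pos (by linarith), abs_of_nonneg hb0]
      nlinarith [mul_le_mul_of_nonneg_left hlamr hb0]
    have hpos : (0 : ℝ) < k 1 := by
      have hqR : (1 : ℝ) ≤ q := mod_cast hq
      nlinarith [neg_abs_le ((-1) ^ m * lam * cfQ Ω m * r)]
    exact_mod_cast hpos
  exact hprim (inA_of_abs_pairω_lt hk1
    ((hpair ▸ hlamr).lt_of_ne (abs_pairω_ne_half hirr (by omega))))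

end Primitive

lemma cfQ_mul_le_two_mul_cfP_succ {Ω : ℝ} (hirr : Irrational Ω) (h0 : 0 < Ω) (h1 : Ω < 1)
    {m : ℕ} (hm : 1 ≤ m) : (cfQ Ω m : ℝ) * Ω ≤ 2 * cfP Ω (m + 1) := by
  obtain ⟨j, rfl⟩ := Nat.exists_eq_add_of_le' hm
  have herr := (abs_le.mp (abs_cfErr_le_one hirr h0 h1 (j + 1))).2
  have hmono : (cfP Ω (j + 1) : ℝ) ≤ cfP Ω (j + 2) :=
    mod_cast (cfP_succ_nonneg_monotone hirr h0 h1).2 j.le_succ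
  have hone : (1 : ℝ) ≤ cfP Ω (j + 2) := mod_cast one_le_cfP hirr h0 h1 j
  rw [cfErr] at herr
  linarith

lemma sub_div_lt_mul_sub {lam R q κ : ℝ} (hlam : 0 < lam) (hR1 : 1 / (2 * lam) < R)
    (hR2 : R < 1 / 2) (hq : 0 < q) (hκ0 : 0 ≤ κ) (hκ : κ ≤ 2 * q) :
    (q - κ / 2) / (2 * lam) < R * (q - κ * R) := by
  rw [div_lt_iff₀ (by positivity)]
  have hR : 1 < R * (2 * lam) := by rwa [div_lt_iff₀ (by positivity)] at hR1
  have hR0 : 0 < R := lt_trans (by positivity) hR1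
  have hpos : 0 < q - κ * R := by
    nlinarith [mul_le_mul_of_nonneg_right hκ hR0.le, mul_pos hq (by linarith : 0 < 1 - 2 * R)]
  nlinarith [mul_lt_mul_of_pos_right hR hpos]

lemma lt_abs_sub_mul_of_abs_sub_bounds {Ω lam b c q p : ℝ} (hΩ : 0 < Ω) (hlam : 0 < lam)
    (hb : 0 ≤ b) (hden : 0 < c + b * Ω ^ 2) (hbΩ : b * Ω ≤ 2 * (c + b * Ω ^ 2)) (hq : 1 ≤ q)
    (hlow : 1 / (2 * lam) < |q * Ω - p|) (hhigh : |q * Ω - p| < 1 / 2) :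
    ((1 + Ω) * q - |b| * Ω * (1 + Ω) / (2 * |c + b * Ω ^ 2|)) / (2 * lam) <
      |q * Ω - p| * (|c * q + b * p * Ω| * (1 + Ω) / |c + b * Ω ^ 2|) := by
  set den := c + b * Ω ^ 2
  set R := |q * Ω - p|
  rw [abs_of_nonneg hb, abs_of_pos hden]
  have hZ : q * den - b * Ω * R ≤ |c * q + b * p * Ω| := by
    have hsplit : c * q + b * p * Ω = q * den - b * Ω * (q * Ω - p) := by ring
    rw [hsplit]
    refine le_trans ?_ (le_abs_self _)
    nlinarith [le_abs_self (q * Ω - p), mul_nonneg hb hΩ.le]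
  have hκ0 : 0 ≤ b * Ω / den := by positivity
  have hκ : b * Ω / den ≤ 2 * q := by
    rw [div_le_iff₀ hden]
    nlinarith
  have hcore := sub_div_lt_mul_sub hlam hlow hhigh (by linarith) hκ0 hκ
  calc ((1 + Ω) * q - b * Ω * (1 + Ω) / (2 * den)) / (2 * lam)
      = (1 + Ω) * ((q - b * Ω / den / 2) / (2 * lam)) := by field_simp
    _ < (1 + Ω) * (R * (q - b * Ω / den * R)) := mul_lt_mul_of_pos_left hcore (by linarith)
    _ = R * ((q * den - b * Ω * R) * (1 + Ω) / den) := by field_simp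
    _ ≤ R * (|c * q + b * p * Ω| * (1 + Ω) / den) := by gcongr

theorem splitting_quadratic_stmt10_general
    (Ω : ℝ) (m : ℕ) (hm : 1 ≤ m) (h0 : 0 < Ω) (h1 : Ω < 1)
    (hquad : IsQuadraticIrrational Ω)
    (lam : ℝ) (hlam : 1 < lam)
    (heig : ((cfMatProd Ω m).map fun z : ℤ => (z : ℝ)).mulVec ![1, Ω] = lam • ![1, Ω])
    (q : ℤ) (hq : PrimitiveInt Ω (Umat Ω m) q) :
    ((1 + Ω) * (q : ℝ) -
        |(cfMatProd Ω m 0 1 : ℝ)| * Ω * (1 + Ω) /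
          (2 * |(cfMatProd Ω m 1 0 : ℝ) + (cfMatProd Ω m 0 1 : ℝ) * Ω ^ 2|)) /
      (2 * lam) < gammaStarQ Ω m q := by
  obtain ⟨hirr, -⟩ := hquad
  obtain ⟨hq1, ⟨-, -, -, hhigh⟩, hprim⟩ := hq
  rw [pairω_kzero] at hhigh
  have hlow := one_div_two_mul_lt_abs_sub_p0 hirr h0 h1 hm hlam heig hq1 hprim
  have hb : (0 : ℝ) ≤ cfQ Ω m := mod_cast (cfQ_nonneg_monotone hirr h0 h1).1 m
  have hc : (1 : ℝ) ≤ cfP Ω (m + 1) := by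
    obtain ⟨j, rfl⟩ := Nat.exists_eq_add_of_le' hm
    exact mod_cast one_le_cfP hirr h0 h1 j
  have hbΩ := cfQ_mul_le_two_mul_cfP_succ hirr h0 h1 hm
  rw [gammaStarQ, KqD]
  simp only [cfMatProd_eq, of_apply, cons_val', cons_val_zero, cons_val_one, empty_val',
    cons_val_fin_one]
  exact lt_abs_sub_mul_of_abs_sub_bounds h0 (by linarith) hb (by positivity)
    (by nlinarith [sq_nonneg Ω]) (mod_cast hq1) hlow hhigh

/-- Lower bound for the limit numerators: for any primitive `q`,
`γ*_q > ((1+Ω)q − α)/(2λ)` with `α = |b|Ω(1+Ω)/(2|c+bΩ²|)`. -/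
theorem splitting_quadratic_stmt10
    (Ω : ℝ) (m : ℕ) (hm : 1 ≤ m) (h0 : 0 < Ω) (h1 : Ω < 1)
    (hquad : IsQuadraticIrrational Ω)
    (hper : gaussOrbit Ω m = Ω)
    (lam : ℝ) (hlam : 1 < lam)
    (heig : ((cfMatProd Ω m).map fun z : ℤ => (z : ℝ)).mulVec ![1, Ω] = lam • ![1, Ω])
    (q : ℤ) (hq : PrimitiveInt Ω (Umat Ω m) q) :
    ((1 + Ω) * (q : ℝ) -
        |(cfMatProd Ω m 0 1 : ℝ)| * Ω * (1 + Ω) /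
          (2 * |(cfMatProd Ω m 1 0 : ℝ) + (cfMatProd Ω m 0 1 : ℝ) * Ω ^ 2|)) /
      (2 * lam) < gammaStarQ Ω m q :=
  splitting_quadratic_stmt10_general Ω m hm h0 h1 hquad lam hlam heig q hq
end
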